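/- Let 𝒱 be a left skew-closed category, T : 𝒜 → 𝒳 a 𝒱-functor between 𝒱-categories, and K an object of 𝒜. Then the family τ_A = T_{A,K} : 𝒜(A,K) → 𝒳(TA,TK) is a presheaf morphism τ : yK → 𝒳(T-,TK), and τ exhibits TK as the yK-weighted colimit of T: for each object X of 𝒳, the morphisms [T_{A,K},1] ∘ L^{TA}_{TK,X} : 𝒳(TK,X) → [𝒜(A,K),𝒳(TA,X)] form a limit cone for the diagram defining the presheaf hom Â(yK, 𝒳(T-,X)). -/

import Mathlib

open CategoryTheory

universe v u w

/-- A left skew-closed category structure on a category `V` (Street, "Skew-closed categories"). -/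
structure SkewClosedStruct (V : Type u) [Category.{v} V] where
  ihom : V → V → V
  imap : ∀ {A A' B B' : V}, (A' ⟶ A) → (B ⟶ B') → (ihom A B ⟶ ihom A' B')
  imap_id : ∀ (A B : V), imap (𝟙 A) (𝟙 B) = 𝟙 (ihom A B)
  imap_comp : ∀ {A A' A'' B B' B'' : V} (f : A' ⟶ A) (f' : A'' ⟶ A') (g : B ⟶ B') (g' : B' ⟶ B''),
      imap (f' ≫ f) (g ≫ g') = imap f g ≫ imap f' g'
  unit : V
  i : ∀ A : V, ihom unit A ⟶ A
  i_natural : ∀ {A B : V} (f : A ⟶ B), imap (𝟙 unit) f ≫ i B = i A ≫ f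
  j : ∀ A : V, unit ⟶ ihom A A
  j_natural : ∀ {A B : V} (f : A ⟶ B), j A ≫ imap (𝟙 A) f = j B ≫ imap f (𝟙 B)
  L : ∀ A B C : V, ihom B C ⟶ ihom (ihom A B) (ihom A C)
  L_natural : ∀ {B B' C C' : V} (A : V) (f : B' ⟶ B) (g : C ⟶ C'),
      imap f g ≫ L A B' C' = L A B C ≫ imap (imap (𝟙 A) f) (imap (𝟙 A) g)
  L_extranatural : ∀ {A A' : V} (h : A' ⟶ A) (B C : V),
      L A B C ≫ imap (𝟙 (ihom A B)) (imap h (𝟙 C))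
        = L A' B C ≫ imap (imap h (𝟙 B)) (𝟙 (ihom A' C))
  SCC1 : ∀ A B C D : V,
      L A C D ≫ L (ihom A B) (ihom A C) (ihom A D) ≫
          imap (L A B C) (𝟙 (ihom (ihom A B) (ihom A D)))
        = L B C D ≫ imap (𝟙 (ihom B C)) (L A B D)
  SCC2 : ∀ A C : V, L A A C ≫ imap (j A) (𝟙 (ihom A C)) ≫ i (ihom A C) = 𝟙 (ihom A C)
  SCC3 : ∀ A B : V, j B ≫ L A B B = j (ihom A B)
  SCC4 : ∀ B C : V, L unit B C ≫ imap (𝟙 (ihom unit B)) (i C) = imap (i B) (𝟙 C)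
  SCC5 : j unit ≫ i unit = 𝟙 unit

/-- A category enriched in the left skew-closed category `𝒱`. -/
structure VCat (V : Type u) [Category.{v} V] (𝒱 : SkewClosedStruct V) where
  Obj : Type w
  Hom : Obj → Obj → V
  id : ∀ A, 𝒱.unit ⟶ Hom A A
  comp : ∀ A B C, Hom B C ⟶ 𝒱.ihom (Hom A B) (Hom A C)
  EC1 : ∀ A B C D,
      comp A C D ≫ 𝒱.L (Hom A B) (Hom A C) (Hom A D) ≫
          𝒱.imap (comp A B C) (𝟙 (𝒱.ihom (Hom A B) (Hom A D)))
        = comp B C D ≫ 𝒱.imap (𝟙 (Hom B C)) (comp A B D)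
  EC2 : ∀ A C, comp A A C ≫ 𝒱.imap (id A) (𝟙 (Hom A C)) ≫ 𝒱.i (Hom A C) = 𝟙 (Hom A C)
  EC3 : ∀ A B, id B ≫ comp A B B = 𝒱.j (Hom A B)

/-- A `𝒱`-functor between `𝒱`-categories. -/
structure VFun {V : Type u} [Category.{v} V] {𝒱 : SkewClosedStruct V}
    (𝒜 : VCat.{v, u, w} V 𝒱) (𝒳 : VCat.{v, u, w} V 𝒱) where
  obj : 𝒜.Obj → 𝒳.Obj
  map : ∀ A B, 𝒜.Hom A B ⟶ 𝒳.Hom (obj A) (obj B)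
  EF1 : ∀ A B C,
      map A C ≫ 𝒳.comp (obj B) (obj A) (obj C) ≫
          𝒱.imap (map B A) (𝟙 (𝒳.Hom (obj B) (obj C)))
        = 𝒜.comp B A C ≫ 𝒱.imap (𝟙 (𝒜.Hom B A)) (map B C)
  EF2 : ∀ A, 𝒜.id A ≫ map A A = 𝒳.id (obj A)

/-- The ground skew-closed category `𝒱`, regarded as a `𝒱`-category. -/
@[reducible] def SkewClosedStruct.self {V : Type u} [Category.{v} V] (𝒱 : SkewClosedStruct V) :
    VCat.{v, u, u} V 𝒱 where
  Obj := V
  Hom := 𝒱.ihom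
  id := 𝒱.j
  comp := 𝒱.L
  EC1 := 𝒱.SCC1
  EC2 := 𝒱.SCC2
  EC3 := 𝒱.SCC3

/-- A `𝒱`-natural transformation between `𝒱`-functors with values in `𝒱` itself. -/
structure VNat {V : Type u} [Category.{v} V] {𝒱 : SkewClosedStruct V}
    {𝒜 : VCat.{v, u, u} V 𝒱} (S T : VFun 𝒜 𝒱.self) where
  app : ∀ A, S.obj A ⟶ T.obj A
  naturality : ∀ A B,
      T.map A B ≫ 𝒱.imap (app A) (𝟙 (T.obj B))
        = S.map A B ≫ 𝒱.imap (𝟙 (S.obj A)) (app B)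

/-- The representable `𝒱`-functor `𝒜(K,-) : 𝒜 ⟶ 𝒱`. -/
def VCat.repr {V : Type u} [Category.{v} V] {𝒱 : SkewClosedStruct V}
    (𝒜 : VCat.{v, u, u} V 𝒱) (K : 𝒜.Obj) : VFun 𝒜 𝒱.self where
  obj := fun A => 𝒜.Hom K A
  map := fun A B => 𝒜.comp K A B
  EF1 := fun A B C => 𝒜.EC1 K B A C
  EF2 := fun A => 𝒜.EC3 K A

/-- A presheaf (right module) on a `𝒱`-category `𝒜`. -/
structure VPresheaf {V : Type u} [Category.{v} V] {𝒱 : SkewClosedStruct V}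
    (𝒜 : VCat.{v, u, w} V 𝒱) where
  obj : 𝒜.Obj → V
  map : ∀ A B, obj A ⟶ 𝒱.ihom (𝒜.Hom B A) (obj B)
  EP1 : ∀ A B C,
      map A B ≫ 𝒱.L (𝒜.Hom B C) (𝒜.Hom B A) (obj B) ≫
          𝒱.imap (𝒜.comp B C A) (𝟙 (𝒱.ihom (𝒜.Hom B C) (obj B)))
        = map A C ≫ 𝒱.imap (𝟙 (𝒜.Hom C A)) (map C B)
  EP2 : ∀ A, map A A ≫ 𝒱.imap (𝒜.id A) (𝟙 (obj A)) ≫ 𝒱.i (obj A) = 𝟙 (obj A)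

/-- The family `f` is a cone over the diagram whose limit is the presheaf hom
`Â(P,Q)`, where the presheaves `P` and `Q` are given by raw data
(object families `PO`, `QO` and structure maps `PM`, `QM`). -/
def IsPshCone {V : Type u} [Category.{v} V] (𝒱 : SkewClosedStruct V)
    (𝒜 : VCat.{v, u, w} V 𝒱)
    (PO : 𝒜.Obj → V) (PM : ∀ A B, PO A ⟶ 𝒱.ihom (𝒜.Hom B A) (PO B))
    (QO : 𝒜.Obj → V) (QM : ∀ A B, QO A ⟶ 𝒱.ihom (𝒜.Hom B A) (QO B))
    (X : V) (f : ∀ A, X ⟶ 𝒱.ihom (PO A) (QO A)) : Prop :=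
  ∀ A B,
    f A ≫ 𝒱.imap (𝟙 (PO A)) (QM A B)
      = f B ≫ 𝒱.L (𝒜.Hom B A) (PO B) (QO B) ≫
          𝒱.imap (PM A B) (𝟙 (𝒱.ihom (𝒜.Hom B A) (QO B)))

/-! The Yoneda lemma does all the work: the cone condition over `Â(yK,Q)` at `(K,A)` forces
`ξ_A = Q_{K,A} ∘ i ∘ [j_K,1] ∘ ξ_K`, and the unit axiom `EP2` makes that factorisation unique, so
`Q_{K,-}` exhibits `QK` as `Â(yK,Q)` for every presheaf `Q`. The theorem is the case
`Q = 𝒳(T-,X)`, whose structure maps at `K` are the given cone `[T_{A,K},1] ∘ L^{TA}_{TK,X}`; the only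
thing to check is that `𝒳(T-,X)`, the restriction of the representable `𝒳(-,X)` along `T`, is a
presheaf. -/

namespace SkewClosedStruct

variable {V : Type u} [Category.{v} V] (𝒱 : SkewClosedStruct V)

lemma imap_left_comm_right {A A' B B' : V} (f : A' ⟶ A) (g : B ⟶ B') :
    𝒱.imap f (𝟙 B) ≫ 𝒱.imap (𝟙 A') g = 𝒱.imap (𝟙 A) g ≫ 𝒱.imap f (𝟙 B') := by
  rw [← 𝒱.imap_comp, ← 𝒱.imap_comp]
  simp

lemma imap_left_comp {A A' A'' B : V} (f : A' ⟶ A) (f' : A'' ⟶ A') :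
    𝒱.imap f (𝟙 B) ≫ 𝒱.imap f' (𝟙 B) = 𝒱.imap (f' ≫ f) (𝟙 B) := by
  rw [← 𝒱.imap_comp, Category.comp_id]

lemma imap_right_comp {A B B' B'' : V} (g : B ⟶ B') (g' : B' ⟶ B'') :
    𝒱.imap (𝟙 A) g ≫ 𝒱.imap (𝟙 A) g' = 𝒱.imap (𝟙 A) (g ≫ g') := by
  rw [← 𝒱.imap_comp, Category.comp_id]

lemma L_natural_left {B B' : V} (A C : V) (f : B' ⟶ B) :
    𝒱.imap f (𝟙 C) ≫ 𝒱.L A B' C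
      = 𝒱.L A B C ≫ 𝒱.imap (𝒱.imap (𝟙 A) f) (𝟙 (𝒱.ihom A C)) := by
  simpa only [𝒱.imap_id] using 𝒱.L_natural A f (𝟙 C)

end SkewClosedStruct

section

variable {V : Type u} [Category.{v} V] {𝒱 : SkewClosedStruct V}

def VCat.homPresheaf (𝒳 : VCat.{v, u, w} V 𝒱) (X : 𝒳.Obj) : VPresheaf 𝒳 where
  obj A := 𝒳.Hom A X
  map A B := 𝒳.comp B A X
  EP1 A B C := 𝒳.EC1 B C A X
  EP2 A := 𝒳.EC2 A X

namespace VPresheaf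

def restrict {𝒜 𝒳 : VCat.{v, u, w} V 𝒱} (P : VPresheaf 𝒳) (T : VFun 𝒜 𝒳) : VPresheaf 𝒜 where
  obj A := P.obj (T.obj A)
  map A B := P.map (T.obj A) (T.obj B) ≫ 𝒱.imap (T.map B A) (𝟙 _)
  EP1 A B C := by
    have hT := T.EF1 C B A
    calc (P.map (T.obj A) (T.obj B) ≫ 𝒱.imap (T.map B A) (𝟙 _)) ≫ 𝒱.L _ _ _ ≫
          𝒱.imap (𝒜.comp B C A) (𝟙 _)
        = P.map (T.obj A) (T.obj B) ≫ 𝒱.L _ _ _ ≫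
            𝒱.imap (𝒜.comp B C A ≫ 𝒱.imap (𝟙 _) (T.map B A)) (𝟙 _) := by
          rw [Category.assoc, reassoc_of% 𝒱.L_natural_left, 𝒱.imap_left_comp]
      _ = P.map (T.obj A) (T.obj B) ≫ 𝒱.L _ _ _ ≫ 𝒱.imap (𝒱.imap (T.map B C) (𝟙 _)) (𝟙 _) ≫
            𝒱.imap (𝒳.comp (T.obj B) (T.obj C) (T.obj A)) (𝟙 _) ≫ 𝒱.imap (T.map C A) (𝟙 _) := by
          rw [← hT, 𝒱.imap_left_comp, 𝒱.imap_left_comp, Category.assoc]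
      _ = (P.map (T.obj A) (T.obj B) ≫ 𝒱.L _ _ _ ≫
            𝒱.imap (𝒳.comp (T.obj B) (T.obj C) (T.obj A)) (𝟙 _)) ≫
            𝒱.imap (𝟙 _) (𝒱.imap (T.map B C) (𝟙 _)) ≫ 𝒱.imap (T.map C A) (𝟙 _) := by
          rw [← reassoc_of% 𝒱.L_extranatural (T.map B C)]
          simp only [Category.assoc, reassoc_of% 𝒱.imap_left_comm_right]
      _ = (P.map (T.obj A) (T.obj C) ≫ 𝒱.imap (T.map C A) (𝟙 _)) ≫
            𝒱.imap (𝟙 _) (P.map (T.obj C) (T.obj B) ≫ 𝒱.imap (T.map B C) (𝟙 _)) := by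
          simp only [P.EP1, Category.assoc]
          rw [reassoc_of% 𝒱.imap_right_comp, ← 𝒱.imap_left_comm_right]
  EP2 A := by
    simp only [Category.assoc, reassoc_of% 𝒱.imap_left_comp, T.EF2]
    exact P.EP2 (T.obj A)

end VPresheaf

/-- `f` is a limit cone for the diagram defining the presheaf hom `Â(P,Q)`. -/
def IsPshLimitCone (𝒱 : SkewClosedStruct V) (𝒜 : VCat.{v, u, w} V 𝒱)
    (PO : 𝒜.Obj → V) (PM : ∀ A B, PO A ⟶ 𝒱.ihom (𝒜.Hom B A) (PO B))
    (QO : 𝒜.Obj → V) (QM : ∀ A B, QO A ⟶ 𝒱.ihom (𝒜.Hom B A) (QO B))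
    (X : V) (f : ∀ A, X ⟶ 𝒱.ihom (PO A) (QO A)) : Prop :=
  IsPshCone 𝒱 𝒜 PO PM QO QM X f ∧
    ∀ (Y : V) (ξ : ∀ A, Y ⟶ 𝒱.ihom (PO A) (QO A)), IsPshCone 𝒱 𝒜 PO PM QO QM Y ξ →
      ∃! h : Y ⟶ X, ∀ A, h ≫ f A = ξ A

variable {𝒜 : VCat.{v, u, w} V 𝒱} (K : 𝒜.Obj)

lemma IsPshCone.app_eq_comp_map {QO : 𝒜.Obj → V}
    {QM : ∀ A B, QO A ⟶ 𝒱.ihom (𝒜.Hom B A) (QO B)} {Y : V}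
    {ξ : ∀ A, Y ⟶ 𝒱.ihom (𝒜.Hom A K) (QO A)}
    (hξ : IsPshCone 𝒱 𝒜 (fun A => 𝒜.Hom A K) (fun A B => 𝒜.comp B A K) QO QM Y ξ) (A : 𝒜.Obj) :
    ξ A = (ξ K ≫ 𝒱.imap (𝒜.id K) (𝟙 _) ≫ 𝒱.i _) ≫ QM K A := by
  calc ξ A = ξ A ≫ 𝒱.L _ _ _ ≫ 𝒱.imap (𝒱.j _) (𝟙 _) ≫ 𝒱.i _ := by
        rw [𝒱.SCC2, Category.comp_id]
    _ = (ξ A ≫ 𝒱.L _ _ _ ≫ 𝒱.imap (𝒜.comp A K K) (𝟙 _)) ≫ 𝒱.imap (𝒜.id K) (𝟙 _) ≫ 𝒱.i _ := by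
        rw [← 𝒜.EC3 A K]
        simp only [Category.assoc, reassoc_of% 𝒱.imap_left_comp]
    _ = (ξ K ≫ 𝒱.imap (𝟙 _) (QM K A)) ≫ 𝒱.imap (𝒜.id K) (𝟙 _) ≫ 𝒱.i _ := by
        rw [← hξ K A]
    _ = (ξ K ≫ 𝒱.imap (𝒜.id K) (𝟙 _) ≫ 𝒱.i _) ≫ QM K A := by
        simp only [Category.assoc, ← reassoc_of% 𝒱.imap_left_comm_right, 𝒱.i_natural]

lemma VPresheaf.isPshLimitCone_map (Q : VPresheaf 𝒜) :
    IsPshLimitCone 𝒱 𝒜 (fun A => 𝒜.Hom A K) (fun A B => 𝒜.comp B A K) Q.obj Q.map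
      (Q.obj K) (Q.map K) := by
  refine ⟨fun A B => (Q.EP1 K B A).symm, fun Y ξ hξ => ?_⟩
  refine ⟨ξ K ≫ 𝒱.imap (𝒜.id K) (𝟙 _) ≫ 𝒱.i _, fun A => (hξ.app_eq_comp_map K A).symm,
    fun h hh => ?_⟩
  calc h = h ≫ Q.map K K ≫ 𝒱.imap (𝒜.id K) (𝟙 _) ≫ 𝒱.i _ := by rw [Q.EP2, Category.comp_id]
    _ = ξ K ≫ 𝒱.imap (𝒜.id K) (𝟙 _) ≫ 𝒱.i _ := by rw [← Category.assoc, hh]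

end

/-- (Street, "Skew-closed categories", Proposition in §7.)
For a `𝒱`-functor `T : 𝒜 ⟶ 𝒳` and an object `K` of `𝒜`, the family
`τ_A = T_{A,K} : 𝒜(A,K) ⟶ 𝒳(TA,TK)` is a presheaf morphism `τ : yK ⟶ 𝒳(T-,TK)`,
and `τ` exhibits `TK` as the `yK`-weighted colimit of `T`: for each object `X` of `𝒳`
the morphisms `[T_{A,K},1] ∘ L^{TA}_{TK,X}` form a limit cone for the diagram
defining the presheaf hom `Â(yK, 𝒳(T-,X))`. -/
theorem colim_yoneda_weight {V : Type u} [Category.{v} V] (𝒱 : SkewClosedStruct V)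
    (𝒜 𝒳 : VCat.{v, u, w} V 𝒱) (T : VFun 𝒜 𝒳) (K : 𝒜.Obj) :
    -- `τ` is a presheaf morphism `yK ⟶ 𝒳(T-,TK)`
    (∀ A B : 𝒜.Obj,
      T.map A K ≫
          (𝒳.comp (T.obj B) (T.obj A) (T.obj K) ≫
            𝒱.imap (T.map B A) (𝟙 (𝒳.Hom (T.obj B) (T.obj K))))
        = 𝒜.comp B A K ≫ 𝒱.imap (𝟙 (𝒜.Hom B A)) (T.map B K)) ∧
    -- and it exhibits `TK` as `colim (yK, T)`
    (∀ X : 𝒳.Obj,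
      IsPshCone 𝒱 𝒜 (fun A => 𝒜.Hom A K) (fun A B => 𝒜.comp B A K)
        (fun A => 𝒳.Hom (T.obj A) X)
        (fun A B => 𝒳.comp (T.obj B) (T.obj A) X ≫
          𝒱.imap (T.map B A) (𝟙 (𝒳.Hom (T.obj B) X)))
        (𝒳.Hom (T.obj K) X)
        (fun A => 𝒳.comp (T.obj A) (T.obj K) X ≫
          𝒱.imap (T.map A K) (𝟙 (𝒳.Hom (T.obj A) X))) ∧
      ∀ (Y : V) (ξ : ∀ A, Y ⟶ 𝒱.ihom (𝒜.Hom A K) (𝒳.Hom (T.obj A) X)),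
        IsPshCone 𝒱 𝒜 (fun A => 𝒜.Hom A K) (fun A B => 𝒜.comp B A K)
          (fun A => 𝒳.Hom (T.obj A) X)
          (fun A B => 𝒳.comp (T.obj B) (T.obj A) X ≫
            𝒱.imap (T.map B A) (𝟙 (𝒳.Hom (T.obj B) X))) Y ξ →
        ∃! h : Y ⟶ 𝒳.Hom (T.obj K) X,
          ∀ A, h ≫ (𝒳.comp (T.obj A) (T.obj K) X ≫
            𝒱.imap (T.map A K) (𝟙 (𝒳.Hom (T.obj A) X))) = ξ A) := by
  exact ⟨fun A B => T.EF1 A B K, fun X => ((𝒳.homPresheaf X).restrict T).isPshLimitCone_map K⟩
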